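/- Let M be a rooted bipartite map with n edges, of type (μ,ν;τ) (so ℓ(μ)+ℓ(ν)+ℓ(τ) = v(M)+f(M) and |μ|=|ν|=|τ|=n), in which exactly i handles appear during its root-deletion process, and let η be any measure of non-orientability. Then 0 ≤ n+2−(ℓ(μ)+ℓ(ν)+ℓ(τ))−2i ≤ η(M) ≤ n+2−(ℓ(μ)+ℓ(ν)+ℓ(τ))−i. -/
import Mathlib


/-- The four possible types of the root edge of a rooted bipartite map. -/
inductive EdgeType : Type
  | bridge | border | twisted | handle
deriving DecidableEq

/-- An abstract model of rooted bipartite maps with the root-deletion process.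
Besides edge counts, root-edge types and deletions (as in the paper), it records the
numbers of vertices and faces and their behaviour under root deletion (which is what
defines the types bridge/border/twisted/handle), the operation `twistRoot` twisting the
root edge of a map whose root edge is a handle, and `handles m`, the number of handles
appearing in the root-deletion process of `m`. -/
structure MapSystem where
  M : Type
  nedges : M → ℕ
  verts : M → ℕ
  faces : M → ℕ
  rootType : M → EdgeType
  del : M → M
  del₁ : M → M
  del₂ : M → M
  twistRoot : M → M
  handles : M → ℕ
  verts_zero : ∀ m, nedges m = 0 → verts m = 1
  faces_zero : ∀ m, nedges m = 0 → faces m = 1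
  nedges_del : ∀ m, 0 < nedges m → rootType m ≠ .bridge → nedges (del m) = nedges m - 1
  nedges_bridge : ∀ m, 0 < nedges m → rootType m = .bridge →
    nedges (del₁ m) + nedges (del₂ m) = nedges m - 1
  verts_del : ∀ m, 0 < nedges m → rootType m ≠ .bridge → verts (del m) = verts m
  verts_bridge : ∀ m, 0 < nedges m → rootType m = .bridge →
    verts (del₁ m) + verts (del₂ m) = verts m
  faces_bridge : ∀ m, 0 < nedges m → rootType m = .bridge →
    faces (del₁ m) + faces (del₂ m) = faces m + 1
  faces_border : ∀ m, 0 < nedges m → rootType m = .border → faces (del m) + 1 = faces m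
  faces_twisted : ∀ m, 0 < nedges m → rootType m = .twisted → faces (del m) = faces m
  faces_handle : ∀ m, 0 < nedges m → rootType m = .handle → faces (del m) = faces m + 1
  handles_zero : ∀ m, nedges m = 0 → handles m = 0
  handles_bridge : ∀ m, 0 < nedges m → rootType m = .bridge →
    handles m = handles (del₁ m) + handles (del₂ m)
  handles_border : ∀ m, 0 < nedges m → rootType m = .border → handles m = handles (del m)
  handles_twisted : ∀ m, 0 < nedges m → rootType m = .twisted → handles m = handles (del m)
  handles_handle : ∀ m, 0 < nedges m → rootType m = .handle → handles m = handles (del m) + 1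
  twist_handle : ∀ m, 0 < nedges m → rootType m = .handle →
    rootType (twistRoot m) = .handle ∧ nedges (twistRoot m) = nedges m ∧
      del (twistRoot m) = del m

/-- A measure of non-orientability (Definition 4.1 of La Croix, Definition 3.1 of the
paper): `η` vanishes on edgeless maps; is additive over bridges; is unchanged by
deleting a border; increases by `1` when deleting a twisted edge; and for a handle,
the two maps `m`, `twistRoot m` obtained from one another by twisting the root handle
take the two values `η(m∖e)` and `η(m∖e)+1` in some order. -/
structure IsMeasureOfNonOrientability (s : MapSystem) (η : s.M → ℕ) : Prop where
  base : ∀ m, s.nedges m = 0 → η m = 0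
  bridge : ∀ m, 0 < s.nedges m → s.rootType m = .bridge → η m = η (s.del₁ m) + η (s.del₂ m)
  border : ∀ m, 0 < s.nedges m → s.rootType m = .border → η m = η (s.del m)
  twisted : ∀ m, 0 < s.nedges m → s.rootType m = .twisted → η m = η (s.del m) + 1
  handle : ∀ m, 0 < s.nedges m → s.rootType m = .handle →
    (η m = η (s.del m) ∧ η (s.twistRoot m) = η (s.del m) + 1) ∨
    (η m = η (s.del m) + 1 ∧ η (s.twistRoot m) = η (s.del m))

theorem key_bounds (s : MapSystem) (η : s.M → ℕ)
    (hη : IsMeasureOfNonOrientability s η) :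
    ∀ n m, s.nedges m = n →
      s.verts m + s.faces m + 2 * s.handles m ≤ s.nedges m + 2 ∧
      s.nedges m + 2 ≤ s.verts m + s.faces m + 2 * s.handles m + η m ∧
      η m + s.verts m + s.faces m + s.handles m ≤ s.nedges m + 2 := by
  intro n
  induction n using Nat.strong_induction_on with
  | _ n ih =>
    intro m hm
    rcases Nat.eq_zero_or_pos (s.nedges m) with h0 | hpos
    · simp [s.verts_zero m h0, s.faces_zero m h0, s.handles_zero m h0, hη.base m h0, h0]
    · cases ht : s.rootType m with
      | bridge =>
        have hn1 := s.nedges_bridge m hpos ht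
        obtain ⟨a1, b1, c1⟩ := ih (s.nedges (s.del₁ m)) (by omega) _ rfl
        obtain ⟨a2, b2, c2⟩ := ih (s.nedges (s.del₂ m)) (by omega) _ rfl
        have hv := s.verts_bridge m hpos ht
        have hf := s.faces_bridge m hpos ht
        have hh := s.handles_bridge m hpos ht
        have he := hη.bridge m hpos ht
        omega
      | border =>
        have hn1 := s.nedges_del m hpos (by simp [ht])
        obtain ⟨a1, b1, c1⟩ := ih (s.nedges (s.del m)) (by omega) _ rfl
        have hv := s.verts_del m hpos (by simp [ht])
        have hf := s.faces_border m hpos ht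
        have hh := s.handles_border m hpos ht
        have he := hη.border m hpos ht
        omega
      | twisted =>
        have hn1 := s.nedges_del m hpos (by simp [ht])
        obtain ⟨a1, b1, c1⟩ := ih (s.nedges (s.del m)) (by omega) _ rfl
        have hv := s.verts_del m hpos (by simp [ht])
        have hf := s.faces_twisted m hpos ht
        have hh := s.handles_twisted m hpos ht
        have he := hη.twisted m hpos ht
        omega
      | handle =>
        have hn1 := s.nedges_del m hpos (by simp [ht])
        obtain ⟨a1, b1, c1⟩ := ih (s.nedges (s.del m)) (by omega) _ rfl
        have hv := s.verts_del m hpos (by simp [ht])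
        have hf := s.faces_handle m hpos ht
        have hh := s.handles_handle m hpos ht
        have he := hη.handle m hpos ht
        rcases he with ⟨he1, _⟩ | ⟨he1, _⟩ <;> omega

/-- **Corollary (bounds on a measure of non-orientability).**
Let `m` be a rooted bipartite map with `n` edges, of type `(μ,ν;τ)` — so that
`ℓ(μ)+ℓ(ν)+ℓ(τ) = v(m)+f(m)` — in whose root-deletion process exactly `i` handles
appear, and let `η` be any measure of non-orientability.  Then
`0 ≤ n+2−(ℓ(μ)+ℓ(ν)+ℓ(τ))−2i ≤ η(m) ≤ n+2−(ℓ(μ)+ℓ(ν)+ℓ(τ))−i`. -/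
theorem stmt_4 (s : MapSystem) (η : s.M → ℕ)
    (hη : IsMeasureOfNonOrientability s η)
    (m : s.M) (n : ℕ) (hn : s.nedges m = n)
    (μ ν τ : Multiset ℕ)
    (hlen : Multiset.card μ + Multiset.card ν + Multiset.card τ = s.verts m + s.faces m)
    (i : ℕ) (hi : s.handles m = i) :
    (0 : ℤ) ≤ (n : ℤ) + 2 - (Multiset.card μ + Multiset.card ν + Multiset.card τ) - 2 * i ∧
    (n : ℤ) + 2 - (Multiset.card μ + Multiset.card ν + Multiset.card τ) - 2 * i ≤ η m ∧
    (η m : ℤ) ≤ (n : ℤ) + 2 - (Multiset.card μ + Multiset.card ν + Multiset.card τ) - i := by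
  obtain ⟨a, b, c⟩ := key_bounds s η hη (s.nedges m) m rfl
  refine ⟨?_, ?_, ?_⟩ <;> omega
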